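/- The braid b¹⁷ = σ_2^{−4} σ_1^{−5} σ_2^{−1} σ_1 σ_2^{−4} σ_1^{−1} σ_2 Δ_3^5 in the braid group B_3 is not quasipositive. -/

import Mathlib

open FreeGroup in
/-- The braid relations on `n` generators. -/
def braidRels (n : ℕ) : Set (FreeGroup (Fin n)) :=
  {r | (∃ i j : Fin n, (i : ℕ) + 1 = (j : ℕ) ∧
          r = of i * of j * of i * (of j * of i * of j)⁻¹) ∨
       (∃ i j : Fin n, (i : ℕ) + 2 ≤ (j : ℕ) ∧
          r = of i * of j * (of j * of i)⁻¹)}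

/-- The braid group `B_{n+1}`, presented with `n` generators `σ_1, …, σ_n`
(so `Braid (m - 1)` is the braid group on `m` strands). -/
def Braid (n : ℕ) : Type := PresentedGroup (braidRels n)

instance (n : ℕ) : Group (Braid n) :=
  inferInstanceAs (Group (PresentedGroup (braidRels n)))

/-- The Artin generator `σ_{i+1}` of the braid group (indices start at `0`,
so `σ 0` is the generator usually written `σ_1`). -/
def σ {n : ℕ} (i : Fin n) : Braid n := PresentedGroup.of i

/-- A braid is quasipositive if it can be written as a (possibly empty) product
of conjugates `w σ_1 w⁻¹` of the first Artin generator. -/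
def Quasipositive {n : ℕ} [NeZero n] (b : Braid n) : Prop :=
  ∃ l : List (Braid n), b = (l.map fun w => w * σ 0 * w⁻¹).prod


/-- `σ_1` in the braid group `B_3`. -/
def σ₁ : Braid 2 := σ 0
/-- `σ_2` in the braid group `B_3`. -/
def σ₂ : Braid 2 := σ 1
/-- The Garside element `Δ_3 = σ_1 σ_2 σ_1` of `B_3`. -/
def Δ₃ : Braid 2 := σ₁ * σ₂ * σ₁

/-!
The exponent sum of `b¹⁷` is `2`, so a quasipositive factorization of it would be a product
`w₁ σ₁ w₁⁻¹ · w₂ σ₁ w₂⁻¹` of exactly two conjugates. Under the reduced Burau representation at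
`t = -1`, `B₃ → SL(2, ℤ)` with `σ₁ ↦ T = !![1, 1; 0, 1]`, a product `x T x⁻¹ · y T y⁻¹` has trace
`2 - c²` with `c` the lower-left entry of `x⁻¹ y`, while `b¹⁷` maps to a matrix of trace `-299`;
this would make `301` a square.
-/

open Matrix MatrixGroups ModularGroup

namespace Braid

def exponentSum (n : ℕ) : Braid n →* Multiplicative ℤ :=
  PresentedGroup.toGroup (f := fun _ => Multiplicative.ofAdd 1) <| by
    rintro r (⟨i, j, -, rfl⟩ | ⟨i, j, -, rfl⟩) <;>
      simp only [map_mul, map_inv, FreeGroup.lift_apply_of] <;> group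

@[simp]
lemma exponentSum_σ {n : ℕ} (i : Fin n) : exponentSum n (σ i) = Multiplicative.ofAdd 1 :=
  PresentedGroup.toGroup.of _

lemma exponentSum_prod_conj_σ_zero {n : ℕ} [NeZero n] (l : List (Braid n)) :
    exponentSum n (l.map fun w => w * σ 0 * w⁻¹).prod = Multiplicative.ofAdd (l.length : ℤ) := by
  induction l with
  | nil => rfl
  | cons w l ih =>
    rw [List.map_cons, List.prod_cons, map_mul, ih]
    simp [← ofAdd_add, add_comm]

end Braid

namespace Matrix.SpecialLinearGroup

lemma trace_conj {n R : Type*} [Fintype n] [DecidableEq n] [CommRing R]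
    (g A : SpecialLinearGroup n R) :
    trace ((g * A * g⁻¹ : SpecialLinearGroup n R) : Matrix n n R) = trace (A : Matrix n n R) := by
  rw [coe_mul, coe_mul, trace_mul_cycle, ← coe_mul, ← coe_mul, inv_mul_cancel, one_mul]

end Matrix.SpecialLinearGroup

lemma Matrix.trace_transvection_mul_mul_adjugate {R : Type*} [CommRing R]
    (M : Matrix (Fin 2) (Fin 2) R) :
    trace (!![1, 1; 0, 1] * M * !![1, 1; 0, 1] * adjugate M) = 2 * M.det - M 1 0 ^ 2 := by
  rw [eta_fin_two M]
  simp only [adjugate_fin_two_of, det_fin_two_of, mul_fin_two, trace_fin_two_of, of_apply,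
    cons_val', cons_val_zero, cons_val_one, empty_val', cons_val_fin_one]
  ring

lemma ModularGroup.trace_conj_T_mul_conj_T (x y : SL(2, ℤ)) :
    trace ((x * T * x⁻¹ * (y * T * y⁻¹) : SL(2, ℤ)) : Matrix (Fin 2) (Fin 2) ℤ) =
      2 - (x⁻¹ * y) 1 0 ^ 2 := by
  rw [show x * T * x⁻¹ * (y * T * y⁻¹) = x * (T * (x⁻¹ * y) * T * (x⁻¹ * y)⁻¹) * x⁻¹ by group,
    Matrix.SpecialLinearGroup.trace_conj]
  generalize x⁻¹ * y = g
  rw [Matrix.SpecialLinearGroup.coe_mul, Matrix.SpecialLinearGroup.coe_mul,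
    Matrix.SpecialLinearGroup.coe_mul, Matrix.SpecialLinearGroup.coe_inv, coe_T,
    trace_transvection_mul_mul_adjugate, g.det_coe, mul_one]

/-- `S T S⁻¹ = !![1, 0; -1, 1]` is the image of `σ₂` under the reduced Burau representation at
`t = -1`. -/
def burauAtNegOne : Braid 2 →* SL(2, ℤ) :=
  PresentedGroup.toGroup (f := ![T, S * T * S⁻¹]) <| by
    rintro r (⟨i, j, hij, rfl⟩ | ⟨i, j, hij, -⟩)
    · obtain rfl : i = 0 := by omega
      obtain rfl : j = 1 := by omega
      decide
    · omega

lemma burauAtNegOne_σ (i : Fin 2) : burauAtNegOne (σ i) = ![T, S * T * S⁻¹] i :=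
  PresentedGroup.toGroup.of _

theorem b17_not_quasipositive :
    ¬ Quasipositive
      ((σ₂ ^ 4)⁻¹ * (σ₁ ^ 5)⁻¹ * σ₂⁻¹ * σ₁ * (σ₂ ^ 4)⁻¹ * σ₁⁻¹ * σ₂ * Δ₃ ^ 5) := by
  rintro ⟨l, hl⟩
  have hlength : l.length = 2 := by
    have h := congrArg (Multiplicative.toAdd ∘ Braid.exponentSum 2) hl
    simp only [Function.comp_apply, Braid.exponentSum_prod_conj_σ_zero, σ₁, σ₂, Δ₃, map_mul,
      map_inv, map_pow, Braid.exponentSum_σ, toAdd_mul, toAdd_inv, toAdd_pow, toAdd_ofAdd,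
      nsmul_eq_mul, Nat.cast_ofNat, mul_one] at h
    omega
  obtain ⟨w₁, w₂, rfl⟩ := List.length_eq_two.mp hlength
  have htrace : trace (burauAtNegOne ((σ₂ ^ 4)⁻¹ * (σ₁ ^ 5)⁻¹ * σ₂⁻¹ * σ₁ * (σ₂ ^ 4)⁻¹ *
      σ₁⁻¹ * σ₂ * Δ₃ ^ 5) : Matrix (Fin 2) (Fin 2) ℤ) = -299 := by
    simp only [σ₁, σ₂, Δ₃, map_mul, map_inv, map_pow, burauAtNegOne_σ]
    decide
  simp only [hl, List.map_cons, List.map_nil, List.prod_cons, List.prod_nil, mul_one, map_mul,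
    map_inv, burauAtNegOne_σ, Matrix.cons_val_zero, trace_conj_T_mul_conj_T] at htrace
  exact (by norm_num : ¬ IsSquare (301 : ℤ)) ⟨_, by rw [← sq]; linarith⟩
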